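/- arXiv:1607.01413 — 2 statements merged into one kernel-verified Lean document; each statement's English description precedes it below -/
import Mathlib

section
/- Let φ be holomorphic on 𝔻² with |φ| ≤ 1, let τ ∈ 𝕋², and let (M, v, I_Y) be a generalized model for φ with a C-point at τ with limit value v_τ. Suppose moreover that φ has nontangential limit φ(τ) at τ with |φ(τ)| = 1. Then for every δ ∈ ℂ² with Re(τ̄¹δ¹) < 0 and Re(τ̄²δ²) < 0, the directional derivative D_δφ(τ) = lim_{t→0⁺} (φ(τ+tδ) − φ(τ))/t exists and equals φ(τ)·⟨δ¹δ²(τ²δ¹(1−Y) + τ¹δ²Y)^{−1} v_τ, v_τ⟩. -/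
open Complex Filter Set

/-- The operator-valued rational function `I_Y(λ)` associated to a positive
contraction `Y` and a point `τ` of the torus. -/
noncomputable def IY {M : Type*} [NormedAddCommGroup M] [InnerProductSpace ℂ M]
    [CompleteSpace M] (Y : M →L[ℂ] M) (τ z : ℂ × ℂ) : M →L[ℂ] M :=
  ((starRingEnd ℂ τ.1 * z.1) • Y + (starRingEnd ℂ τ.2 * z.2) • ((1 : M →L[ℂ] M) - Y)
      - (starRingEnd ℂ τ.1 * starRingEnd ℂ τ.2 * z.1 * z.2) • (1 : M →L[ℂ] M)) *
    Ring.inverse ((1 : M →L[ℂ] M) - (starRingEnd ℂ τ.1 * z.1) • ((1 : M →L[ℂ] M) - Y)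
      - (starRingEnd ℂ τ.2 * z.2) • Y)


/-! Write `a = τ̄¹δ¹`, `b = τ̄²δ²` and `B = (a(1 - Y) + bY)⁻¹`, which exists because `Re a, Re b < 0`
make the numerical range of `a(1 - Y) + bY` stay away from `0`. Along the ray `t ↦ τ + tδ` one has
`I_Y = 1 + t·ab·B`, and the ray approaches `τ` nontangentially, so `φ → φ(τ)` and `v → v_τ` along it.
Letting the first point of the model identity run to `τ` gives
`1 - conj φ(τ) · φ(τ + tδ) = -t·ab·⟨v_τ, B v_{τ+tδ}⟩`; since `|φ(τ)| = 1`, multiplying by `φ(τ)` and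
dividing by `t` yields the difference quotient, which tends to `φ(τ)·ab·⟨v_τ, B v_τ⟩`. -/

open scoped InnerProductSpace ComplexConjugate Topology

theorem Ring.inverse_smul {𝕜 R : Type*} [Field 𝕜] [Ring R] [Algebra 𝕜 R] {c : 𝕜} (hc : c ≠ 0)
    (x : R) : Ring.inverse (c • x) = c⁻¹ • Ring.inverse x := by
  have hu : IsUnit (algebraMap 𝕜 R c) := (isUnit_iff_ne_zero.2 hc).map _
  have hinv : Ring.inverse (algebraMap 𝕜 R c) = algebraMap 𝕜 R c⁻¹ := by
    rw [← mul_one (Ring.inverse _), Ring.inverse_mul_eq_iff_eq_mul _ _ _ hu, ← map_mul,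
      mul_inv_cancel₀ hc, map_one]
  rw [Algebra.smul_def, Ring.inverse_mul (Or.inl hu), hinv, ← Algebra.commutes, Algebra.smul_def]

theorem smul_ringInverse_eq_of_norm_eq_one {R : Type*} [Ring R] [Algebra ℂ R] (P Q : R)
    {τ : ℂ × ℂ} (hτ1 : ‖τ.1‖ = 1) (hτ2 : ‖τ.2‖ = 1) (δ : ℂ × ℂ) :
    (δ.1 * δ.2) • Ring.inverse ((τ.2 * δ.1) • P + (τ.1 * δ.2) • Q)
      = (conj τ.1 * δ.1 * (conj τ.2 * δ.2))
          • Ring.inverse ((conj τ.1 * δ.1) • P + (conj τ.2 * δ.2) • Q) := by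
  have h1 : τ.1 ≠ 0 := norm_ne_zero_iff.1 (by rw [hτ1]; exact one_ne_zero)
  have h2 : τ.2 ≠ 0 := norm_ne_zero_iff.1 (by rw [hτ2]; exact one_ne_zero)
  rw [← Complex.inv_eq_conj hτ1, ← Complex.inv_eq_conj hτ2]
  have hrot : (τ.2 * δ.1) • P + (τ.1 * δ.2) • Q
      = (τ.1 * τ.2) • ((τ.1⁻¹ * δ.1) • P + (τ.2⁻¹ * δ.2) • Q) := by
    rw [smul_add, smul_smul, smul_smul]
    congr 2 <;> field_simp
  rw [hrot, Ring.inverse_smul (mul_ne_zero h1 h2), smul_smul]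
  congr 1
  field_simp

theorem Complex.eventually_norm_one_add_mul_le {c : ℂ} (hc : c.re < 0) :
    ∀ᶠ t : ℝ in 𝓝[>] 0, ‖1 + (t : ℂ) * c‖ ≤ 1 + t * c.re / 2 := by
  have hsmall : ∀ᶠ t : ℝ in 𝓝[>] 0, t * Complex.normSq c < -c.re := by
    have : Tendsto (fun t : ℝ => t * Complex.normSq c) (𝓝 0) (𝓝 0) := by
      simpa using (tendsto_id (x := 𝓝 (0 : ℝ))).mul_const (Complex.normSq c)
    exact (this.eventually (gt_mem_nhds (neg_pos.2 hc))).filter_mono nhdsWithin_le_nhds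
  filter_upwards [hsmall, self_mem_nhdsWithin] with t ht (ht0 : 0 < t)
  have hsq : ‖1 + (t : ℂ) * c‖ ^ 2 = 1 + 2 * t * c.re + t ^ 2 * Complex.normSq c := by
    rw [Complex.sq_norm, Complex.normSq_apply, Complex.normSq_apply]
    simp only [Complex.add_re, Complex.add_im, Complex.mul_re, Complex.mul_im,
      Complex.ofReal_re, Complex.ofReal_im, Complex.one_re, Complex.one_im]
    ring
  have hle : ‖1 + (t : ℂ) * c‖ ^ 2 ≤ 1 + t * c.re := by
    nlinarith [mul_lt_mul_of_pos_left ht ht0]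
  have hpos : 0 ≤ 1 + t * c.re / 2 := by nlinarith [sq_nonneg ‖1 + (t : ℂ) * c‖]
  exact le_of_pow_le_pow_left₀ two_ne_zero hpos (by nlinarith [sq_nonneg (t * c.re)])

theorem Complex.norm_add_mul_eq_norm_one_add_mul {z : ℂ} (hz : ‖z‖ = 1) (t w : ℂ) :
    ‖z + t * w‖ = ‖1 + t * (conj z * w)‖ := by
  have hz0 : z ≠ 0 := norm_ne_zero_iff.1 (by rw [hz]; exact one_ne_zero)
  rw [← one_mul ‖1 + _‖, ← hz, ← norm_mul, ← Complex.inv_eq_conj hz]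
  congr 1
  field_simp

def TendstoNontangentially {X : Type*} [TopologicalSpace X] (f : ℂ × ℂ → X) (τ : ℂ × ℂ)
    (L : X) : Prop :=
  ∀ S : Set (ℂ × ℂ), S ⊆ {z : ℂ × ℂ | ‖z‖ < 1} →
    (∃ c > 0, ∀ z ∈ S, ‖τ - z‖ ≤ c * (1 - ‖z‖)) → Tendsto f (𝓝[S] τ) (𝓝 L)

def ray (τ δ : ℂ × ℂ) (t : ℝ) : ℂ × ℂ := (τ.1 + t * δ.1, τ.2 + t * δ.2)

theorem norm_sub_ray (τ δ : ℂ × ℂ) {t : ℝ} (ht : 0 ≤ t) : ‖τ - ray τ δ t‖ = t * ‖δ‖ := by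
  have : τ - ray τ δ t = -((t : ℂ) • δ) := by
    ext <;> simp [ray]
  rw [this, norm_neg, norm_smul, Complex.norm_real, Real.norm_of_nonneg ht]

theorem exists_mul_le_one_sub_norm_ray {τ δ : ℂ × ℂ} (hτ1 : ‖τ.1‖ = 1) (hτ2 : ‖τ.2‖ = 1)
    (ha : (conj τ.1 * δ.1).re < 0) (hb : (conj τ.2 * δ.2).re < 0) :
    ∃ κ > 0, ∀ᶠ t : ℝ in 𝓝[>] 0, κ * t ≤ 1 - ‖ray τ δ t‖ := by
  set m := min (-(conj τ.1 * δ.1).re) (-(conj τ.2 * δ.2).re)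
  refine ⟨m / 2, half_pos (lt_min (neg_pos.2 ha) (neg_pos.2 hb)), ?_⟩
  filter_upwards [Complex.eventually_norm_one_add_mul_le ha,
    Complex.eventually_norm_one_add_mul_le hb, self_mem_nhdsWithin] with t h1 h2 (ht0 : 0 < t)
  rw [le_sub_comm, ray, Prod.norm_def, Complex.norm_add_mul_eq_norm_one_add_mul hτ1,
    Complex.norm_add_mul_eq_norm_one_add_mul hτ2]
  have hma : m ≤ -(conj τ.1 * δ.1).re := min_le_left _ _
  have hmb : m ≤ -(conj τ.2 * δ.2).re := min_le_right _ _
  exact max_le (by nlinarith) (by nlinarith)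

theorem TendstoNontangentially.tendsto_comp_ray {X : Type*} [TopologicalSpace X]
    {f : ℂ × ℂ → X} {τ δ : ℂ × ℂ} {L : X} (hf : TendstoNontangentially f τ L) {κ : ℝ}
    (hκ : 0 < κ) (h : ∀ᶠ t : ℝ in 𝓝[>] 0, κ * t ≤ 1 - ‖ray τ δ t‖) :
    Tendsto (fun t => f (ray τ δ t)) (𝓝[>] 0) (𝓝 L) := by
  set T := Ioi (0 : ℝ) ∩ {t | κ * t ≤ 1 - ‖ray τ δ t‖}
  have hT : T ∈ 𝓝[>] 0 := inter_mem self_mem_nhdsWithin h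
  refine (hf (ray τ δ '' T) ?_ ?_).comp ?_
  · rintro _ ⟨t, ⟨ht0, ht⟩, rfl⟩
    exact sub_pos.1 ((mul_pos hκ ht0).trans_le ht)
  · refine ⟨(‖δ‖ + 1) / κ, by positivity, ?_⟩
    rintro _ ⟨t, ⟨ht0, ht⟩, rfl⟩
    rw [norm_sub_ray τ δ (le_of_lt ht0)]
    calc t * ‖δ‖ ≤ (‖δ‖ + 1) * t := by nlinarith [mem_Ioi.1 ht0]
      _ = (‖δ‖ + 1) / κ * (κ * t) := by field_simp
      _ ≤ _ := mul_le_mul_of_nonneg_left ht (by positivity)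
  · refine tendsto_nhdsWithin_iff.2 ⟨?_, ?_⟩
    · have : Continuous (ray τ δ) := by unfold ray; fun_prop
      simpa [ray] using (this.tendsto 0).mono_left nhdsWithin_le_nhds
    · filter_upwards [hT] with t ht using mem_image_of_mem _ ht

section HilbertSpace

variable {M : Type*} [NormedAddCommGroup M] [InnerProductSpace ℂ M] [CompleteSpace M]

theorem ContinuousLinearMap.isUnit_smul_add_smul_of_re_neg {P Q : M →L[ℂ] M}
    (hP : P.IsPositive) (hQ : Q.IsPositive) (hPQ : P + Q = 1) {a b : ℂ} (ha : a.re < 0)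
    (hb : b.re < 0) : IsUnit (a • P + b • Q) := by
  set m := min (-a.re) (-b.re)
  have hm : 0 < m := lt_min (neg_pos.2 ha) (neg_pos.2 hb)
  refine isUnit_of_forall_le_norm_inner_map _ (c := ⟨m, hm.le⟩) hm fun x => ?_
  obtain ⟨hp, hp'⟩ := Complex.le_def.1 (hP.inner_nonneg_left x)
  obtain ⟨hq, hq'⟩ := Complex.le_def.1 (hQ.inner_nonneg_left x)
  rw [Complex.zero_re] at hp hq
  rw [Complex.zero_im] at hp' hq'
  have hsum : (⟪P x, x⟫_ℂ).re + (⟪Q x, x⟫_ℂ).re = ‖x‖ ^ 2 := by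
    rw [← Complex.add_re, ← inner_add_left, ← add_apply, hPQ, one_apply_eq_self,
      inner_self_eq_norm_sq_to_K]
    norm_cast
  have hre : (⟪(a • P + b • Q) x, x⟫_ℂ).re
      = a.re * (⟪P x, x⟫_ℂ).re + b.re * (⟪Q x, x⟫_ℂ).re := by
    simp only [add_apply, smul_apply, inner_add_left, inner_smul_left, Complex.add_re,
      Complex.mul_re, Complex.conj_re, Complex.conj_im, ← hp', ← hq']
    ring
  calc ‖x‖ ^ 2 * (⟨m, hm.le⟩ : NNReal) ≤ -(⟪(a • P + b • Q) x, x⟫_ℂ).re := by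
        rw [hre, ← hsum]
        change _ * m ≤ _
        nlinarith [min_le_left (-a.re) (-b.re), min_le_right (-a.re) (-b.re)]
    _ ≤ ‖⟪(a • P + b • Q) x, x⟫_ℂ‖ := (neg_le_abs _).trans (Complex.abs_re_le_norm _)

theorem IY_ray (Y : M →L[ℂ] M) {τ : ℂ × ℂ} (hτ1 : ‖τ.1‖ = 1) (hτ2 : ‖τ.2‖ = 1) (δ : ℂ × ℂ)
    {t : ℝ} (ht : t ≠ 0)
    (hA : IsUnit ((conj τ.1 * δ.1) • (1 - Y) + (conj τ.2 * δ.2) • Y)) :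
    IY Y τ (ray τ δ t) = 1 + ((t : ℂ) * (conj τ.1 * δ.1 * (conj τ.2 * δ.2)))
      • Ring.inverse ((conj τ.1 * δ.1) • (1 - Y) + (conj τ.2 * δ.2) • Y) := by
  set a := conj τ.1 * δ.1
  set b := conj τ.2 * δ.2
  set A := a • (1 - Y) + b • Y
  have h1 : conj τ.1 * (τ.1 + t * δ.1) = 1 + t * a := by
    rw [mul_add, Complex.conj_mul', hτ1]; push_cast; ring
  have h2 : conj τ.2 * (τ.2 + t * δ.2) = 1 + t * b := by
    rw [mul_add, Complex.conj_mul', hτ2]; push_cast; ring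
  have h12 : conj τ.1 * conj τ.2 * (τ.1 + t * δ.1) * (τ.2 + t * δ.2)
      = (1 + t * a) * (1 + t * b) := by
    rw [← h1, ← h2]; ring
  have hden : 1 - (1 + t * a) • (1 - Y) - (1 + t * b) • Y = (-(t : ℂ)) • A := by module
  have hnum : (1 + t * a) • Y + (1 + t * b) • (1 - Y) - ((1 + t * a) * (1 + t * b)) • 1
      = (-(t : ℂ)) • (A + ((t : ℂ) * (a * b)) • 1) := by module
  simp only [IY, ray, h1, h2, h12, hden, hnum]
  rw [Ring.inverse_smul (neg_ne_zero.2 (Complex.ofReal_ne_zero.2 ht)), smul_mul_smul_comm,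
    mul_inv_cancel₀ (neg_ne_zero.2 (Complex.ofReal_ne_zero.2 ht)), one_smul, add_mul,
    Ring.mul_inverse_cancel _ hA, smul_mul_assoc, one_mul]

theorem tendsto_sub_div_of_model_identity {g : ℝ → ℂ} {u : ℝ → M} {L : ℂ} {w : M}
    (B : M →L[ℂ] M) (k : ℂ) (hL : ‖L‖ = 1) (hg : Tendsto g (𝓝[>] 0) (𝓝 L))
    (hu : Tendsto u (𝓝[>] 0) (𝓝 w))
    (hmodel : ∀ᶠ t in 𝓝[>] 0, ∀ᶠ s in 𝓝[>] 0, 1 - conj (g s) * g t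
      = ⟪u s, (1 - (1 + ((s : ℂ) * k) • B).adjoint * (1 + ((t : ℂ) * k) • B)) (u t)⟫_ℂ) :
    Tendsto (fun t : ℝ => (g t - L) / t) (𝓝[>] 0) (𝓝 (L * (k * ⟪w, B w⟫_ℂ))) := by
  have hone_sub : ∀ᶠ t in 𝓝[>] 0, 1 - conj L * g t = -((t : ℂ) * k * ⟪w, B (u t)⟫_ℂ) := by
    filter_upwards [hmodel] with t ht
    have hlhs : Tendsto (fun s => 1 - conj (g s) * g t) (𝓝[>] 0) (𝓝 (1 - conj L * g t)) :=
      tendsto_const_nhds.sub (((Complex.continuous_conj.tendsto L).comp hg).mul_const _)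
    have hop : Continuous fun s : ℝ =>
        (1 - (1 + ((s : ℂ) * k) • B).adjoint * (1 + ((t : ℂ) * k) • B)) (u t) := by
      fun_prop
    have hrhs := hu.inner (𝕜 := ℂ) ((hop.tendsto 0).mono_left nhdsWithin_le_nhds)
    rw [tendsto_nhds_unique (hlhs.congr' ht) hrhs]
    simp only [Complex.ofReal_zero, zero_mul, zero_smul, add_zero,
      ContinuousLinearMap.adjoint_one, one_mul, sub_add_cancel_left, neg_apply, smul_apply,
      inner_neg_right, inner_smul_right]
  have hquot : (fun t : ℝ => L * (k * ⟪w, B (u t)⟫_ℂ)) =ᶠ[𝓝[>] 0] fun t => (g t - L) / t := by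
    have hLL : L * conj L = 1 := by rw [Complex.mul_conj', hL]; norm_num
    filter_upwards [hone_sub, self_mem_nhdsWithin] with t ht (ht0 : 0 < t)
    rw [eq_div_iff (Complex.ofReal_ne_zero.2 ht0.ne')]
    linear_combination L * ht + g t * hLL
  exact (tendsto_const_nhds.mul (tendsto_const_nhds.mul
    (tendsto_const_nhds.inner ((B.continuous.tendsto w).comp hu)))).congr' hquot

end HilbertSpace

theorem stmt4_general {M : Type*} [NormedAddCommGroup M] [InnerProductSpace ℂ M] [CompleteSpace M]
    (φ : ℂ × ℂ → ℂ)
    (τ : ℂ × ℂ) (hτ1 : ‖τ.1‖ = 1) (hτ2 : ‖τ.2‖ = 1)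
    (Y : M →L[ℂ] M) (hY : Y.IsPositive) (hY' : ((1 : M →L[ℂ] M) - Y).IsPositive)
    (v : ℂ × ℂ → M)
    -- `(M, v, I_Y)` is a generalized model for `φ`
    (hmodel : ∀ zl zm : ℂ × ℂ, ‖zl‖ < 1 → ‖zm‖ < 1 →
      (1 : ℂ) - starRingEnd ℂ (φ zm) * φ zl =
        (inner ℂ (v zm)
          ((((1 : M →L[ℂ] M) - ContinuousLinearMap.adjoint (IY Y τ zm) * IY Y τ zl)) (v zl)) : ℂ))
    -- the model has a `C`-point at `τ` with limit value `vτ`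
    (vτ : M)
    (hC : ∀ S : Set (ℂ × ℂ), S ⊆ {z : ℂ × ℂ | ‖z‖ < 1} →
      (∃ c > 0, ∀ z ∈ S, ‖τ - z‖ ≤ c * (1 - ‖z‖)) →
      Tendsto v (nhdsWithin τ S) (nhds vτ))
    -- `φ` has nontangential limit `φτ` at `τ`, of modulus one
    (φτ : ℂ) (hφτ : ‖φτ‖ = 1)
    (hφlim : ∀ S : Set (ℂ × ℂ), S ⊆ {z : ℂ × ℂ | ‖z‖ < 1} →
      (∃ c > 0, ∀ z ∈ S, ‖τ - z‖ ≤ c * (1 - ‖z‖)) →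
      Tendsto φ (nhdsWithin τ S) (nhds φτ)) :
    ∀ δ : ℂ × ℂ, (starRingEnd ℂ τ.1 * δ.1).re < 0 → (starRingEnd ℂ τ.2 * δ.2).re < 0 →
      Tendsto (fun t : ℝ => (φ (τ.1 + (t : ℂ) * δ.1, τ.2 + (t : ℂ) * δ.2) - φτ) / (t : ℂ))
        (nhdsWithin (0 : ℝ) (Set.Ioi 0))
        (nhds (φτ * (inner ℂ vτ
          (((δ.1 * δ.2) •
            Ring.inverse ((τ.2 * δ.1) • ((1 : M →L[ℂ] M) - Y) + (τ.1 * δ.2) • Y)) vτ) : ℂ))) := by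
  intro δ ha hb
  have hA := ContinuousLinearMap.isUnit_smul_add_smul_of_re_neg hY' hY (sub_add_cancel 1 Y) ha hb
  obtain ⟨κ, hκ, hray⟩ := exists_mul_le_one_sub_norm_ray hτ1 hτ2 ha hb
  have hdisk : ∀ᶠ t : ℝ in 𝓝[>] 0, ‖ray τ δ t‖ < 1 := by
    filter_upwards [hray, self_mem_nhdsWithin] with t ht (ht0 : 0 < t)
    exact sub_pos.1 ((mul_pos hκ ht0).trans_le ht)
  rw [smul_ringInverse_eq_of_norm_eq_one _ _ hτ1 hτ2, smul_apply, inner_smul_right]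
  refine tendsto_sub_div_of_model_identity (g := fun t => φ (ray τ δ t)) _ _ hφτ
    (TendstoNontangentially.tendsto_comp_ray hφlim hκ hray)
    (TendstoNontangentially.tendsto_comp_ray hC hκ hray) ?_
  filter_upwards [hdisk, self_mem_nhdsWithin] with t ht (ht0 : 0 < t)
  filter_upwards [hdisk, self_mem_nhdsWithin] with s hs (hs0 : 0 < s)
  rw [← IY_ray Y hτ1 hτ2 δ ht0.ne' hA, ← IY_ray Y hτ1 hτ2 δ hs0.ne' hA]
  exact hmodel _ _ ht hs

theorem stmt4 {M : Type*} [NormedAddCommGroup M] [InnerProductSpace ℂ M] [CompleteSpace M]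
    (φ : ℂ × ℂ → ℂ) (hφd : DifferentiableOn ℂ φ {z : ℂ × ℂ | ‖z‖ < 1})
    (hφb : ∀ z : ℂ × ℂ, ‖z‖ < 1 → ‖φ z‖ ≤ 1)
    (τ : ℂ × ℂ) (hτ1 : ‖τ.1‖ = 1) (hτ2 : ‖τ.2‖ = 1)
    (Y : M →L[ℂ] M) (hY : Y.IsPositive) (hY' : ((1 : M →L[ℂ] M) - Y).IsPositive)
    (v : ℂ × ℂ → M) (hv : DifferentiableOn ℂ v {z : ℂ × ℂ | ‖z‖ < 1})
    -- `(M, v, I_Y)` is a generalized model for `φ`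
    (hmodel : ∀ zl zm : ℂ × ℂ, ‖zl‖ < 1 → ‖zm‖ < 1 →
      (1 : ℂ) - starRingEnd ℂ (φ zm) * φ zl =
        (inner ℂ (v zm)
          ((((1 : M →L[ℂ] M) - ContinuousLinearMap.adjoint (IY Y τ zm) * IY Y τ zl)) (v zl)) : ℂ))
    -- the model has a `C`-point at `τ` with limit value `vτ`
    (vτ : M)
    (hC : ∀ S : Set (ℂ × ℂ), S ⊆ {z : ℂ × ℂ | ‖z‖ < 1} →
      (∃ c > 0, ∀ z ∈ S, ‖τ - z‖ ≤ c * (1 - ‖z‖)) →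
      Tendsto v (nhdsWithin τ S) (nhds vτ))
    -- `φ` has nontangential limit `φτ` at `τ`, of modulus one
    (φτ : ℂ) (hφτ : ‖φτ‖ = 1)
    (hφlim : ∀ S : Set (ℂ × ℂ), S ⊆ {z : ℂ × ℂ | ‖z‖ < 1} →
      (∃ c > 0, ∀ z ∈ S, ‖τ - z‖ ≤ c * (1 - ‖z‖)) →
      Tendsto φ (nhdsWithin τ S) (nhds φτ)) :
    ∀ δ : ℂ × ℂ, (starRingEnd ℂ τ.1 * δ.1).re < 0 → (starRingEnd ℂ τ.2 * δ.2).re < 0 →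
      Tendsto (fun t : ℝ => (φ (τ.1 + (t : ℂ) * δ.1, τ.2 + (t : ℂ) * δ.2) - φτ) / (t : ℂ))
        (nhdsWithin (0 : ℝ) (Set.Ioi 0))
        (nhds (φτ * (inner ℂ vτ
          (((δ.1 * δ.2) •
            Ring.inverse ((τ.2 * δ.1) • ((1 : M →L[ℂ] M) - Y) + (τ.1 * δ.2) • Y)) vτ) : ℂ))) :=
  stmt4_general φ τ hτ1 hτ2 Y hY hY' v hmodel vτ hC φτ hφτ hφlim
end

section
/- Let τ ∈ 𝕋² and y ∈ (0,1). Then τ is a carapoint for φ_y, i.e. there is a sequence λ_n ∈ 𝔻² tending to τ with (1 − |φ_y(λ_n)|)/(1 − ‖λ_n‖_∞) bounded; but φ_y is not nontangentially differentiable at τ: there exist no w ∈ ℂ and ℂ-linear map L : ℂ² → ℂ such that for every δ ∈ ℂ² with Re(τ̄¹δ¹) < 0 and Re(τ̄²δ²) < 0 the limit lim_{t→0⁺} (φ_y(τ+tδ) − w)/t exists and equals L(δ). -/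
open Complex Filter Set

/-- The scalar rational inner function `φ_y` associated to `τ ∈ 𝕋²` and `y ∈ [0,1]`. -/
noncomputable def phiy (τ : ℂ × ℂ) (y : ℝ) (z : ℂ × ℂ) : ℂ :=
  (starRingEnd ℂ τ.1 * z.1 * (y : ℂ) + starRingEnd ℂ τ.2 * z.2 * (1 - (y : ℂ))
      - starRingEnd ℂ τ.1 * starRingEnd ℂ τ.2 * z.1 * z.2) /
    (1 - starRingEnd ℂ τ.1 * z.1 * (1 - (y : ℂ)) - starRingEnd ℂ τ.2 * z.2 * (y : ℂ))

open Topology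

/-!
In the coordinates `a = τ̄¹λ¹`, `b = τ̄²λ²` the function is
`(y a + (1-y) b - a b) / (1 - (1-y) a - y b)`. On the diagonal `a = b = r` it equals `r`, so
radial approach to `τ` keeps the Carathéodory ratio at `1`. Along `a = 1 + tA`, `b = 1 + tB` it
equals `1 + t · AB / ((1-y)A + yB)` exactly, so a nontangential derivative would have to agree with
`(A, B) ↦ AB / ((1-y)A + yB)` on the quadrant `Re A, Re B < 0`; for `0 < y < 1` this function is
not additive there.
-/

noncomputable def phiySlope (y : ℝ) (A B : ℂ) : ℂ :=
  A * B / ((1 - y) * A + y * B)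

lemma conj_mul_self_of_norm_eq_one {z : ℂ} (hz : ‖z‖ = 1) : starRingEnd ℂ z * z = 1 := by
  rw [Complex.conj_mul', hz]
  norm_num

section UnimodularBase

variable {τ : ℂ × ℂ} (hτ1 : ‖τ.1‖ = 1) (hτ2 : ‖τ.2‖ = 1) (y : ℝ)
include hτ1 hτ2

lemma phiy_smul_self {r : ℂ} (hr : r ≠ 1) : phiy τ y (r • τ) = r := by
  have h1 := conj_mul_self_of_norm_eq_one hτ1
  have h2 := conj_mul_self_of_norm_eq_one hτ2
  have hden : 1 - starRingEnd ℂ τ.1 * (r * τ.1) * (1 - (y : ℂ))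
      - starRingEnd ℂ τ.2 * (r * τ.2) * (y : ℂ) = 1 - r := by
    linear_combination (-r * (1 - (y : ℂ))) * h1 + (-r * (y : ℂ)) * h2
  simp only [phiy, Prod.smul_fst, Prod.smul_snd, smul_eq_mul]
  rw [hden, div_eq_iff (sub_ne_zero.mpr hr.symm)]
  linear_combination (r * y) * h1 + (r * (1 - (y : ℂ))) * h2
    - r ^ 2 * (starRingEnd ℂ τ.2 * τ.2) * h1 - r ^ 2 * h2

lemma phiy_add_mul_ray {A B t : ℂ} (ht : t ≠ 0) (hs : (1 - y) * A + y * B ≠ 0) :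
    phiy τ y (τ.1 + t * (τ.1 * A), τ.2 + t * (τ.2 * B)) = 1 + t * phiySlope y A B := by
  have h1 := conj_mul_self_of_norm_eq_one hτ1
  have h2 := conj_mul_self_of_norm_eq_one hτ2
  have hden : 1 - starRingEnd ℂ τ.1 * (τ.1 + t * (τ.1 * A)) * (1 - (y : ℂ))
      - starRingEnd ℂ τ.2 * (τ.2 + t * (τ.2 * B)) * (y : ℂ)
      = -(t * ((1 - y) * A + y * B)) := by
    linear_combination (-(1 - (y : ℂ)) * (1 + t * A)) * h1 + (-(y : ℂ) * (1 + t * B)) * h2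
  have hrhs : (1 + t * phiySlope y A B) * -(t * ((1 - y) * A + y * B))
      = -(t * ((1 - y) * A + y * B)) - t ^ 2 * (A * B) := by
    rw [phiySlope]
    generalize (1 - (y : ℂ)) * A + y * B = s at hs ⊢
    field_simp
    ring
  simp only [phiy]
  rw [hden, div_eq_iff (neg_ne_zero.mpr (mul_ne_zero ht hs)), hrhs]
  linear_combination
    ((1 + t * A) * y - starRingEnd ℂ τ.2 * τ.2 * (1 + t * A) * (1 + t * B)) * h1
    + ((1 + t * B) * (1 - (y : ℂ)) - (1 + t * A) * (1 + t * B)) * h2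

end UnimodularBase

lemma eq_and_eq_of_tendsto_slope {v q w L : ℂ}
    (h : Tendsto (fun t : ℝ => (v + t * q - w) / t) (𝓝[>] 0) (𝓝 L)) : w = v ∧ L = q := by
  have hofReal : Tendsto (fun t : ℝ => (t : ℂ)) (𝓝[>] 0) (𝓝 0) :=
    (Complex.continuous_ofReal.tendsto' 0 0 Complex.ofReal_zero).mono_left nhdsWithin_le_nhds
  have hpos : ∀ᶠ t : ℝ in 𝓝[>] 0, (t : ℂ) ≠ 0 := by
    filter_upwards [self_mem_nhdsWithin] with t ht using Complex.ofReal_ne_zero.mpr ht.ne'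
  have hvw : v - w = 0 := by
    have hlim := (h.mul hofReal).sub (hofReal.mul_const q)
    rw [mul_zero, zero_mul, sub_zero] at hlim
    refine tendsto_nhds_unique (tendsto_const_nhds.congr' ?_) hlim
    filter_upwards [hpos] with t ht
    rw [div_mul_cancel₀ _ ht]
    ring
  refine ⟨(sub_eq_zero.mp hvw).symm, tendsto_nhds_unique h (tendsto_const_nhds.congr' ?_)⟩
  filter_upwards [hpos] with t ht
  rw [eq_div_iff ht]
  linear_combination -hvw

lemma phiySlope_denom_ne_zero {y : ℝ} (hy0 : 0 ≤ y) (hy1 : y ≤ 1) {A B : ℂ}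
    (hA : A.re < 0) (hB : B.re < 0) : (1 - y) * A + y * B ≠ 0 := by
  have hre : ((1 - y) * A + y * B).re = (1 - y) * A.re + y * B.re := by simp
  refine fun h => absurd hre ?_
  rw [h, Complex.zero_re]
  have hA' := mul_le_mul_of_nonneg_left (le_max_left A.re B.re) (sub_nonneg.mpr hy1)
  have hB' := mul_le_mul_of_nonneg_left (le_max_right A.re B.re) hy0
  linarith [max_lt hA hB]

lemma not_forall_linearMap_eq_phiySlope {y : ℝ} (hy0 : 0 < y) (hy1 : y < 1)
    (L : ℂ × ℂ →ₗ[ℂ] ℂ) :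
    ¬ ∀ A B : ℂ, A.re < 0 → B.re < 0 → L (A, B) = phiySlope y A B := by
  intro hL
  have hcleared :
      ∀ A B : ℂ, A.re < 0 → B.re < 0 → L (A, B) * ((1 - y) * A + y * B) = A * B :=
    fun A B hA hB => (hL A B hA hB).symm ▸
      div_mul_cancel₀ _ (phiySlope_denom_ne_zero hy0.le hy1.le hA hB)
  have e1 := hcleared (-2) (-1) (by norm_num) (by norm_num)
  have e2 := hcleared (-1) (-2) (by norm_num) (by norm_num)
  have e3 := hcleared (-3) (-3) (by norm_num) (by norm_num)
  have hadd := L.map_add (-2, -1) (-1, -2)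
  rw [Prod.mk_add_mk] at hadd
  norm_num at hadd
  set s1 : ℂ := (1 - y) * -2 + y * -1
  set s2 : ℂ := (1 - y) * -1 + y * -2
  -- `L` additive forces `s1 * s2 = 2`, i.e. `y (1 - y) = 0`
  have hy : ((y * (1 - y) : ℝ) : ℂ) = 0 := by
    push_cast
    linear_combination (1 / 9 : ℂ) * (-(s1 * s2) * e3 - 3 * (s1 * s2 * hadd + s2 * e1 + s1 * e2))
  have hpos : 0 < y * (1 - y) := mul_pos hy0 (sub_pos.mpr hy1)
  exact hpos.ne' (Complex.ofReal_eq_zero.mp hy)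

lemma phiy_isCarapoint {τ : ℂ × ℂ} (hτ1 : ‖τ.1‖ = 1) (hτ2 : ‖τ.2‖ = 1) (y : ℝ) :
    ∃ (l : ℕ → ℂ × ℂ) (C : ℝ), (∀ n, ‖l n‖ < 1) ∧ Tendsto l atTop (𝓝 τ) ∧
      ∀ n, |(1 - ‖phiy τ y (l n)‖) / (1 - ‖l n‖)| ≤ C := by
  set r : ℕ → ℝ := fun n => n / (n + 1)
  have hr0 (n : ℕ) : 0 ≤ r n := by positivity
  have hr1 (n : ℕ) : r n < 1 := (div_lt_one (by positivity)).mpr (by linarith)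
  have hnorm (n : ℕ) : ‖(r n : ℂ) • τ‖ = r n := by
    rw [norm_smul, Prod.norm_def, hτ1, hτ2, max_self, mul_one, Complex.norm_real,
      Real.norm_of_nonneg (hr0 n)]
  refine ⟨fun n => (r n : ℂ) • τ, 1, fun n => (hnorm n).trans_lt (hr1 n), ?_, fun n => ?_⟩
  · have hr : Tendsto (fun n => (r n : ℂ)) atTop (𝓝 1) := by
      have := (tendsto_natCast_div_add_atTop (1 : ℝ)).ofReal
      rwa [Complex.ofReal_one] at this
    simpa using hr.smul_const τ
  · have hφ : ‖phiy τ y ((r n : ℂ) • τ)‖ = ‖(r n : ℂ) • τ‖ := by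
      rw [phiy_smul_self hτ1 hτ2 y (by exact_mod_cast (hr1 n).ne), hnorm, Complex.norm_real,
        Real.norm_of_nonneg (hr0 n)]
    rw [hφ, abs_div]
    exact div_self_le_one _

lemma phiy_not_nontangentially_differentiable {τ : ℂ × ℂ} (hτ1 : ‖τ.1‖ = 1) (hτ2 : ‖τ.2‖ = 1)
    {y : ℝ} (hy0 : 0 < y) (hy1 : y < 1) :
    ¬ ∃ (w : ℂ) (L : (ℂ × ℂ) →ₗ[ℂ] ℂ), ∀ δ : ℂ × ℂ,
        (starRingEnd ℂ τ.1 * δ.1).re < 0 → (starRingEnd ℂ τ.2 * δ.2).re < 0 →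
        Tendsto (fun t : ℝ =>
            (phiy τ y (τ.1 + (t : ℂ) * δ.1, τ.2 + (t : ℂ) * δ.2) - w) / (t : ℂ))
          (𝓝[>] 0) (𝓝 (L δ)) := by
  rintro ⟨w, L, hL⟩
  -- `rotate` carries the quadrant `Re A, Re B < 0` onto the cone of directions in `hL`
  let rotate := LinearMap.prodMap (LinearMap.mulLeft ℂ τ.1) (LinearMap.mulLeft ℂ τ.2)
  refine not_forall_linearMap_eq_phiySlope hy0 hy1 (L.comp rotate) fun A B hA hB => ?_
  have hconj {z : ℂ} (hz : ‖z‖ = 1) (C : ℂ) : starRingEnd ℂ z * (z * C) = C := by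
    rw [← mul_assoc, conj_mul_self_of_norm_eq_one hz, one_mul]
  have hlim := hL (τ.1 * A, τ.2 * B) (by rwa [hconj hτ1]) (by rwa [hconj hτ2])
  have hs := phiySlope_denom_ne_zero hy0.le hy1.le hA hB
  dsimp only at hlim
  refine (eq_and_eq_of_tendsto_slope (v := 1) (q := phiySlope y A B) (w := w)
    (hlim.congr' ?_)).2
  filter_upwards [self_mem_nhdsWithin] with t ht
  rw [phiy_add_mul_ray hτ1 hτ2 y (Complex.ofReal_ne_zero.mpr (ne_of_gt ht)) hs]

theorem stmt8 (τ : ℂ × ℂ) (hτ1 : ‖τ.1‖ = 1) (hτ2 : ‖τ.2‖ = 1)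
    (y : ℝ) (hy0 : 0 < y) (hy1 : y < 1) :
    -- `τ` is a carapoint for `φ_y`
    (∃ (l : ℕ → ℂ × ℂ) (C : ℝ), (∀ n, ‖l n‖ < 1) ∧ Tendsto l atTop (nhds τ) ∧
      ∀ n, |(1 - ‖phiy τ y (l n)‖) / (1 - ‖l n‖)| ≤ C) ∧
    -- but `φ_y` is not nontangentially differentiable at `τ`
    ¬ ∃ (w : ℂ) (L : (ℂ × ℂ) →ₗ[ℂ] ℂ), ∀ δ : ℂ × ℂ,
        (starRingEnd ℂ τ.1 * δ.1).re < 0 → (starRingEnd ℂ τ.2 * δ.2).re < 0 →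
        Tendsto (fun t : ℝ =>
            (phiy τ y (τ.1 + (t : ℂ) * δ.1, τ.2 + (t : ℂ) * δ.2) - w) / (t : ℂ))
          (nhdsWithin (0 : ℝ) (Set.Ioi 0)) (nhds (L δ)) :=
  ⟨phiy_isCarapoint hτ1 hτ2 y, phiy_not_nontangentially_differentiable hτ1 hτ2 hy0 hy1⟩
end
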